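/- There exist a dimension d and four density matrices ρ₁, ρ₂, ρ₃, ρ₄ of dimension d such that the 4×4 real symmetric matrix E₄ with entries (E₄)ᵢⱼ = √(F(ρᵢ; ρⱼ)) is not positive semidefinite. -/

import Mathlib

open scoped Classical

open Matrix ComplexOrder

/-- The positive semidefinite square root of a matrix: the unique PSD square root
when the matrix is PSD, and `0` otherwise. -/
noncomputable def msqrt {n : Type*} [Fintype n] [DecidableEq n]
    (A : Matrix n n ℂ) : Matrix n n ℂ :=
  if h : A.PosSemidef then
    (h.1.eigenvectorUnitary : Matrix n n ℂ) *
      diagonal (fun i => ((Real.sqrt (h.1.eigenvalues i) : ℝ) : ℂ)) * star (h.1.eigenvectorUnitary : Matrix n n ℂ)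
  else 0

/-- Fidelity between two states: `F(ρ₁; ρ₂) = (tr √(√ρ₁ · ρ₂ · √ρ₁))²`. -/
noncomputable def fidelity {n : Type*} [Fintype n] [DecidableEq n]
    (ρ₁ ρ₂ : Matrix n n ℂ) : ℝ :=
  ((msqrt (msqrt ρ₁ * ρ₂ * msqrt ρ₁)).trace).re ^ 2

/-!
For a pure state `|v⟩⟨v|` one has `√F(|v⟩⟨v|; |w⟩⟨w|) = |⟨v, w⟩|`, so for pure states `E₄` is the
entrywise absolute value of a Gram matrix. Taking two orthonormal bases of `ℝ²`, one rotated
against the other by the angle with cosine `3/5`, that matrix is not positive semidefinite: its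
quadratic form at `(1, -1, 1, -1)` is `4 - 2 (3/5 + 4/5 + 4/5 + 3/5) = -8/5`.
-/

lemma msqrt_eq_of_mul_self {n : Type*} [Fintype n] [DecidableEq n]
    {A B : Matrix n n ℂ} (hB : B.PosSemidef) (hBB : B * B = A) : msqrt A = B := by
  have hA : A.PosSemidef := by
    rw [← hBB]
    nth_rewrite 1 [← hB.isHermitian]
    exact posSemidef_conjTranspose_mul_self B
  rw [msqrt, dif_pos hA]
  open scoped MatrixOrder in
  rw [← CFC.sqrt_unique hBB hB.nonneg, CFC.sqrt_eq_cfc, cfc_nnreal_eq_real _ A hA.nonneg,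
    hA.1.cfc_eq]
  simp only [IsHermitian.cfc, Unitary.conjStarAlgAut_apply]
  congr 3
  funext i
  simp [max_eq_left (hA.eigenvalues_nonneg i)]

def pureState {n : Type*} (v : n → ℂ) : Matrix n n ℂ :=
  vecMulVec v (star v)

section PureState

variable {n : Type*} [Fintype n] {v : n → ℂ}

lemma pureState_posSemidef (v : n → ℂ) : (pureState v).PosSemidef :=
  posSemidef_vecMulVec_self_star v

lemma trace_pureState (v : n → ℂ) : (pureState v).trace = star v ⬝ᵥ v := by
  rw [pureState, trace_vecMulVec, dotProduct_comm]

lemma pureState_mul_self (hv : star v ⬝ᵥ v = 1) : pureState v * pureState v = pureState v := by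
  rw [pureState, vecMulVec_mul_vecMulVec, hv, one_smul]

lemma pureState_mul_pureState_mul_pureState (v w : n → ℂ) :
    pureState v * pureState w * pureState v = ((‖star v ⬝ᵥ w‖ ^ 2 : ℝ) : ℂ) • pureState v := by
  rw [pureState, pureState, vecMulVec_mul_vecMulVec, vecMulVec_mul_vecMulVec, smul_dotProduct,
    star_dotProduct w, smul_eq_mul, RCLike.star_def, RCLike.mul_conj, vecMulVec_smul]
  push_cast
  rfl

variable [DecidableEq n]

lemma fidelity_pureState (hv : star v ⬝ᵥ v = 1) (w : n → ℂ) :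
    fidelity (pureState v) (pureState w) = ‖star v ⬝ᵥ w‖ ^ 2 := by
  have hroot : msqrt (pureState v * pureState w * pureState v) =
      ((‖star v ⬝ᵥ w‖ : ℝ) : ℂ) • pureState v := by
    refine msqrt_eq_of_mul_self ((pureState_posSemidef v).smul ?_) ?_
    · exact_mod_cast norm_nonneg _
    · rw [smul_mul_smul_comm, pureState_mul_self hv, pureState_mul_pureState_mul_pureState]
      push_cast
      ring_nf
  rw [fidelity, msqrt_eq_of_mul_self (pureState_posSemidef v) (pureState_mul_self hv), hroot,
    trace_smul, trace_pureState, hv]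
  simp

lemma sqrt_fidelity_pureState (hv : star v ⬝ᵥ v = 1) (w : n → ℂ) :
    √(fidelity (pureState v) (pureState w)) = ‖star v ⬝ᵥ w‖ := by
  rw [fidelity_pureState hv, Real.sqrt_sq (norm_nonneg _)]

end PureState

lemma star_ofReal_dotProduct_ofReal {n : Type*} [Fintype n] (x y : n → ℝ) :
    star (fun k => (x k : ℂ)) ⬝ᵥ (fun k => (y k : ℂ)) = ((x ⬝ᵥ y : ℝ) : ℂ) := by
  simp [dotProduct]

/-- `{e₀, e₂}` and `{e₁, e₃}` are orthonormal bases of `ℝ²`. -/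
noncomputable def rotatedBases : Fin 4 → Fin 2 → ℝ :=
  ![![1, 0], ![3 / 5, 4 / 5], ![0, 1], ![-4 / 5, 3 / 5]]

lemma rotatedBases_dotProduct_self (i : Fin 4) : rotatedBases i ⬝ᵥ rotatedBases i = 1 := by
  fin_cases i <;> norm_num [rotatedBases, dotProduct, Fin.sum_univ_succ]

lemma not_posSemidef_abs_gram_rotatedBases :
    ¬ (of fun i j => |rotatedBases i ⬝ᵥ rotatedBases j|).PosSemidef := by
  intro h
  have hform := h.dotProduct_mulVec_nonneg ![1, -1, 1, -1]
  norm_num [rotatedBases, dotProduct, mulVec, Fin.sum_univ_succ, abs_of_nonneg, abs_of_nonpos]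
    at hform

/-- There exist four density matrices whose 4×4 matrix of root fidelities
`(E₄)ᵢⱼ = √F(ρᵢ; ρⱼ)` is not positive semidefinite. -/
theorem exists_four_states_rootFidelity_matrix_not_posSemidef :
    ∃ (d : ℕ) (ρ : Fin 4 → Matrix (Fin d) (Fin d) ℂ),
      (∀ i, (ρ i).PosSemidef) ∧ (∀ i, (ρ i).trace = 1) ∧
      ¬ (Matrix.of fun i j : Fin 4 =>
          Real.sqrt (fidelity (ρ i) (ρ j))).PosSemidef := by
  have hunit (i : Fin 4) :
      star (fun k => (rotatedBases i k : ℂ)) ⬝ᵥ (fun k => (rotatedBases i k : ℂ)) = 1 := by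
    rw [star_ofReal_dotProduct_ofReal, rotatedBases_dotProduct_self, Complex.ofReal_one]
  refine ⟨2, fun i => pureState (fun k => (rotatedBases i k : ℂ)),
    fun i => pureState_posSemidef _, fun i => (trace_pureState _).trans (hunit i), ?_⟩
  convert not_posSemidef_abs_gram_rotatedBases using 3
  ext i j
  dsimp only
  rw [sqrt_fidelity_pureState (hunit i), star_ofReal_dotProduct_ofReal,
    Complex.norm_real, Real.norm_eq_abs]
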